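/- arXiv:1908.03913 — 2 statements merged into one kernel-verified Lean document; each statement's English description precedes it below -/
import Mathlib

section
/- For the sampled second-order stable spline kernel K(i,j) = (e^{-β(i+j)-β max(i,j)})/2 − e^{-3β max(i,j)}/6 on positive integers, the discrete-time RBF function h(x) = Σ_{j=1}^∞ K(j, j+|x|) equals ((3 e^{-2β|x|} − e^{-3β|x|})/6) · (e^{-3β}/(1 − e^{-3β})) for all x ∈ ℤ. -/
/-! Along the diagonal shift `(t, t + a)` with `a ≥ 0` the maximum is `t + a`, so each kernel term
factors as a function of the lag `a` times `e^{-3βt}`; at `t = j + 1` the series is therefore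
that factor times the geometric series `∑_{j ≥ 1} (e^{-3β})^j = e^{-3β} / (1 - e^{-3β})`. -/

open Real

theorem tsum_geometric_add_one_of_lt_one {r : ℝ} (h₀ : 0 ≤ r) (h₁ : r < 1) :
    ∑' n : ℕ, r ^ (n + 1) = r / (1 - r) := by
  simp only [pow_succ', tsum_mul_left, tsum_geometric_of_lt_one h₀ h₁, div_eq_mul_inv]

theorem stableSpline_shift_eq_mul_exp (β t a : ℝ) (ha : 0 ≤ a) :
    exp (-β * (t + (t + a))) * exp (-β * max t (t + a)) / 2 - exp (-3 * β * max t (t + a)) / 6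
      = (3 * exp (-2 * β * a) - exp (-3 * β * a)) / 6 * exp (-3 * β * t) := by
  rw [max_eq_right (le_add_of_nonneg_right ha), ← exp_add]
  have h₁ : -β * (t + (t + a)) + -β * (t + a) = -2 * β * a + -3 * β * t := by ring
  have h₂ : -3 * β * (t + a) = -3 * β * a + -3 * β * t := by ring
  rw [h₁, h₂, exp_add, exp_add]
  ring

/-- For the sampled second-order stable spline kernel
`K(i,j) = e^{-β(i+j)} e^{-β max(i,j)} / 2 − e^{-3β max(i,j)} / 6` on positive integers,
the discrete-time RBF function `h(x) = ∑_{j=1}^∞ K(j, j+|x|)` equals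
`((3 e^{-2β|x|} − e^{-3β|x|})/6) ⬝ (e^{-3β}/(1 − e^{-3β}))` for all `x ∈ ℤ`. -/
theorem stmt_6 (β : ℝ) (hβ : 0 < β) (x : ℤ) :
    (∑' j : ℕ,
        (Real.exp (-β * (((j : ℝ) + 1) + (((j : ℝ) + 1) + |(x : ℝ)|)))
            * Real.exp (-β * max ((j : ℝ) + 1) (((j : ℝ) + 1) + |(x : ℝ)|)) / 2
          - Real.exp (-3 * β * max ((j : ℝ) + 1) (((j : ℝ) + 1) + |(x : ℝ)|)) / 6))
      = ((3 * Real.exp (-2 * β * |(x : ℝ)|) - Real.exp (-3 * β * |(x : ℝ)|)) / 6)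
          * (Real.exp (-3 * β) / (1 - Real.exp (-3 * β))) := by
  have hr : exp (-3 * β) < 1 := exp_lt_one_iff.mpr (by linarith)
  have hpow (j : ℕ) : exp (-3 * β * ((j : ℝ) + 1)) = exp (-3 * β) ^ (j + 1) := by
    rw [← exp_nat_mul]
    push_cast
    ring_nf
  simp_rw [stableSpline_shift_eq_mul_exp β _ _ (abs_nonneg (x : ℝ)), hpow, tsum_mul_left,
    tsum_geometric_add_one_of_lt_one (exp_nonneg _) hr]
end

section
/- The function h(x) = (3 e^{-2β|x|} − e^{-3β|x|})/(18β) on ℝ (β > 0) is a positive-definite function, i.e. for any points x_1,…,x_n ∈ ℝ and real coefficients c_1,…,c_n, Σ_{i,j} c_i c_j h(x_i − x_j) ≥ 0. -/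
/-!
Write `E γ a t = 𝟙[t ≥ a] e^{-γ (t - a)}`. For `b ≤ a` the product `E p a · E q b` is
`e^{-q (a - b)} E (p + q) a`, so `∫ E p a · E q b = e^{-q (a - b)} / (p + q)`. With
`u a = E (2β) a` and `v a = E (2β) a - E (3β) a` this gives, in `L²(ℝ)`,
`3 h (a - b) = 5 ⟪v a, v b⟫ + ⟪u a, u b⟫`, and Gram matrices are positive semidefinite.
-/

open MeasureTheory Set Real

section Gram

variable {α ι : Type*} [MeasurableSpace α] {μ : Measure α} [Fintype ι]

theorem sum_sum_mul_integral_mul_nonneg (f : ι → α → ℝ) (hf : ∀ i, MemLp (f i) 2 μ)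
    (c : ι → ℝ) : 0 ≤ ∑ i, ∑ j, c i * c j * ∫ t, f i t * f j t ∂μ := by
  have hint : ∀ i j, Integrable (fun t => c i * c j * (f i t * f j t)) μ :=
    fun i j => ((hf i).integrable_mul (hf j)).const_mul _
  have hsq : ∀ t, (∑ i, c i * f i t) ^ 2 = ∑ i, ∑ j, c i * c j * (f i t * f j t) := fun t => by
    rw [sq, Finset.sum_mul_sum]
    exact Finset.sum_congr rfl fun i _ => Finset.sum_congr rfl fun j _ => by ring
  calc 0 ≤ ∫ t, (∑ i, c i * f i t) ^ 2 ∂μ := integral_nonneg fun t => sq_nonneg _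
    _ = ∑ i, ∑ j, ∫ t, c i * c j * (f i t * f j t) ∂μ := by
        simp_rw [hsq, integral_finsetSum _ fun i _ => integrable_finsetSum _ fun j _ => hint i j,
          integral_finsetSum _ fun j _ => hint _ j]
    _ = ∑ i, ∑ j, c i * c j * ∫ t, f i t * f j t ∂μ := by simp_rw [integral_const_mul]

theorem integral_sub_mul_sub {f₁ f₂ g₁ g₂ : α → ℝ} (hf₁ : MemLp f₁ 2 μ) (hf₂ : MemLp f₂ 2 μ)
    (hg₁ : MemLp g₁ 2 μ) (hg₂ : MemLp g₂ 2 μ) :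
    ∫ t, (f₁ t - f₂ t) * (g₁ t - g₂ t) ∂μ = ∫ t, f₁ t * g₁ t ∂μ - ∫ t, f₁ t * g₂ t ∂μ
      - (∫ t, f₂ t * g₁ t ∂μ - ∫ t, f₂ t * g₂ t ∂μ) := by
  have hI : ∀ {f g : α → ℝ}, MemLp f 2 μ → MemLp g 2 μ → Integrable (fun t => f t * g t) μ :=
    fun hf hg => hf.integrable_mul hg
  simp_rw [sub_mul, mul_sub]
  rw [integral_sub, integral_sub (hI hf₁ hg₁) (hI hf₁ hg₂),
    integral_sub (hI hf₂ hg₁) (hI hf₂ hg₂)]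
  exacts [(hI hf₁ hg₁).sub (hI hf₁ hg₂), (hI hf₂ hg₁).sub (hI hf₂ hg₂)]

end Gram

noncomputable def oneSidedExp (γ a : ℝ) : ℝ → ℝ :=
  (Ici a).indicator fun t => exp (-γ * (t - a))

section OneSidedExp

variable {γ p q a b : ℝ}

theorem oneSidedExp_mul_of_le (hba : b ≤ a) (t : ℝ) :
    oneSidedExp p a t * oneSidedExp q b t = exp (-q * (a - b)) * oneSidedExp (p + q) a t := by
  by_cases ht : a ≤ t
  · simp only [oneSidedExp, indicator_of_mem (mem_Ici.2 ht),
      indicator_of_mem (mem_Ici.2 (hba.trans ht)), ← exp_add]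
    ring_nf
  · simp [oneSidedExp, indicator_of_notMem (show t ∉ Ici a from ht)]

theorem measurable_oneSidedExp : Measurable (oneSidedExp γ a) :=
  (by fun_prop : Measurable fun t => exp (-γ * (t - a))).indicator measurableSet_Ici

theorem integral_oneSidedExp (hγ : 0 < γ) : ∫ t, oneSidedExp γ a t = γ⁻¹ := by
  have hexp : (fun t => exp (-γ * (t - a))) = fun t => exp (γ * a) * exp (-γ * t) := by
    funext t; rw [← exp_add]; ring_nf
  rw [oneSidedExp, integral_indicator measurableSet_Ici, integral_Ici_eq_integral_Ioi, hexp,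
    integral_const_mul, integral_exp_mul_Ioi (by linarith), mul_div_assoc', mul_neg,
    ← exp_add]
  simp [field]

theorem integrable_oneSidedExp (hγ : 0 < γ) : Integrable (oneSidedExp γ a) :=
  .of_integral_ne_zero <| by simp [integral_oneSidedExp hγ, hγ.ne']

theorem memLp_two_oneSidedExp (hγ : 0 < γ) : MemLp (oneSidedExp γ a) 2 := by
  refine (memLp_two_iff_integrable_sq measurable_oneSidedExp.aestronglyMeasurable).2 ?_
  simpa [sq, oneSidedExp_mul_of_le le_rfl] using
    integrable_oneSidedExp (a := a) (add_pos hγ hγ)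

theorem integral_oneSidedExp_mul_of_le (hp : 0 < p) (hq : 0 < q) (hba : b ≤ a) :
    ∫ t, oneSidedExp p a t * oneSidedExp q b t = exp (-q * (a - b)) / (p + q) := by
  simp_rw [oneSidedExp_mul_of_le hba, integral_const_mul, integral_oneSidedExp (add_pos hp hq),
    div_eq_mul_inv]

end OneSidedExp

section StableSpline

variable {β : ℝ}

theorem stableSpline_eq_integral_of_le (hβ : 0 < β) {a b : ℝ} (hba : b ≤ a) :
    3 * ((3 * exp (-2 * β * (a - b)) - exp (-3 * β * (a - b))) / (18 * β)) =
      5 * (∫ t, (oneSidedExp (2 * β) a t - oneSidedExp (3 * β) a t) *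
          (oneSidedExp (2 * β) b t - oneSidedExp (3 * β) b t))
        + ∫ t, oneSidedExp (2 * β) a t * oneSidedExp (2 * β) b t := by
  have h2 : 0 < 2 * β := by positivity
  have h3 : 0 < 3 * β := by positivity
  rw [integral_sub_mul_sub (memLp_two_oneSidedExp h2) (memLp_two_oneSidedExp h3)
      (memLp_two_oneSidedExp h2) (memLp_two_oneSidedExp h3)]
  simp only [integral_oneSidedExp_mul_of_le h2 h2 hba, integral_oneSidedExp_mul_of_le h2 h3 hba,
    integral_oneSidedExp_mul_of_le h3 h2 hba, integral_oneSidedExp_mul_of_le h3 h3 hba, neg_mul]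
  field_simp
  ring

theorem stableSpline_eq_integral (hβ : 0 < β) (a b : ℝ) :
    (3 * exp (-2 * β * |a - b|) - exp (-3 * β * |a - b|)) / (18 * β) =
      (5 * (∫ t, (oneSidedExp (2 * β) a t - oneSidedExp (3 * β) a t) *
          (oneSidedExp (2 * β) b t - oneSidedExp (3 * β) b t))
        + ∫ t, oneSidedExp (2 * β) a t * oneSidedExp (2 * β) b t) / 3 := by
  rw [eq_div_iff three_ne_zero, mul_comm]
  rcases le_total b a with hba | hab
  · rw [abs_of_nonneg (sub_nonneg.2 hba)]
    exact stableSpline_eq_integral_of_le hβ hba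
  · rw [abs_sub_comm, abs_of_nonneg (sub_nonneg.2 hab)]
    convert stableSpline_eq_integral_of_le hβ hab using 3 <;> simp only [mul_comm]

end StableSpline

/-- The second-order stable spline RBF kernel `h(x) = (3e^{-2β|x|} − e^{-3β|x|})/(18β)`
(β > 0) is a positive-definite function on `ℝ`. -/
theorem stmt_10 (β : ℝ) (hβ : 0 < β) (n : ℕ) (x : Fin n → ℝ) (c : Fin n → ℝ) :
    0 ≤ ∑ i : Fin n, ∑ j : Fin n,
      c i * c j *
        ((3 * Real.exp (-2 * β * |x i - x j|) - Real.exp (-3 * β * |x i - x j|))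
          / (18 * β)) := by
  have h2 : 0 < 2 * β := by positivity
  have h3 : 0 < 3 * β := by positivity
  have hv := sum_sum_mul_integral_mul_nonneg
    (fun i t => oneSidedExp (2 * β) (x i) t - oneSidedExp (3 * β) (x i) t)
    (fun i => (memLp_two_oneSidedExp h2).sub (memLp_two_oneSidedExp h3)) c
  have hu := sum_sum_mul_integral_mul_nonneg (fun i => oneSidedExp (2 * β) (x i))
    (fun i => memLp_two_oneSidedExp h2) c
  simp_rw [stableSpline_eq_integral hβ, mul_div_assoc', ← Finset.sum_div, mul_add,
    Finset.sum_add_distrib, mul_left_comm _ (5 : ℝ), ← Finset.mul_sum]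
  positivity
end
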